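/- Let (B, ω) be a compact symplectic manifold admitting a nontrivial Hofer displacement energy (e(B') > 0 for every closed ball B' embedded in B). Fix t ∈ (0,1]. Let φ_{F_i} be a sequence of Hamiltonian isotopies such that the time-t maps φ^t_{F_i} converge uniformly to a homeomorphism ψ_t, and let F be a smooth Hamiltonian with ‖F_i # F̄‖_Hofer → 0, where F_i # F̄ generates (φ_F)^{-1} ∘ φ_{F_i}. Then ψ_t = φ^t_F. Equivalently: if ψ_t ≠ φ^t_F, there is a small ball displaced by (φ^t_F)^{-1} ∘ φ^t_{F_i} for large i, contradicting the energy–capacity inequality 0 < e(ball) ≤ ‖F_i # F̄‖_Hofer → 0. -/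

import Mathlib

/-!
If `ψ x ≠ φ_F x`, continuity of `ψ` and `φ_F` at `x` together with the uniform convergence
`Φ i → ψ` give a neighbourhood `U` of `x` whose images under `Φ i` (for large `i`) and under `φ_F`
lie in disjoint balls around `ψ x` and `φ_F x`. Then `φ_F⁻¹ ∘ Φ i` displaces `U`, so the
energy–capacity inequality gives `0 < e U ≤ ν i → 0`, a contradiction.
-/

open Filter Metric Topology

theorem TendstoUniformly.exists_mem_nhds_eventually_disjoint_image
    {α β ι : Type*} [TopologicalSpace α] [MetricSpace β] {l : Filter ι}
    {Φ : ι → α → β} {ψ f : α → β} {x : α} (hΦ : TendstoUniformly Φ ψ l)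
    (hψ : ContinuousAt ψ x) (hf : ContinuousAt f x) (hne : ψ x ≠ f x) :
    ∃ U ∈ 𝓝 x, ∀ᶠ i in l, Disjoint (Φ i '' U) (f '' U) := by
  set δ := dist (ψ x) (f x)
  have hδ : 0 < δ / 3 := by have := dist_pos.2 hne; positivity
  refine ⟨ψ ⁻¹' ball (ψ x) (δ / 3) ∩ f ⁻¹' ball (f x) (δ / 3),
    inter_mem (hψ (ball_mem_nhds _ hδ)) (hf (ball_mem_nhds _ hδ)), ?_⟩
  filter_upwards [Metric.tendstoUniformly_iff.1 hΦ (δ / 3) hδ] with i hi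
  have hballs : Disjoint (ball (ψ x) (2 * δ / 3)) (ball (f x) (δ / 3)) :=
    ball_disjoint_ball (by linarith)
  refine hballs.mono ?_ ?_
  · rintro _ ⟨y, ⟨hy, -⟩, rfl⟩
    have hψy : dist (ψ y) (ψ x) < δ / 3 := hy
    calc dist (Φ i y) (ψ x) ≤ dist (ψ y) (Φ i y) + dist (ψ y) (ψ x) := dist_triangle_left _ _ _
      _ < 2 * δ / 3 := by linarith [hi y]
  · rintro _ ⟨y, ⟨-, hy⟩, rfl⟩
    exact hy

theorem Equiv.image_symm_comp_inter_eq_empty {α : Type*} (g : α ≃ α) {Φ : α → α} {A : Set α}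
    (h : Disjoint (Φ '' A) (g '' A)) : (g.symm ∘ Φ) '' A ∩ A = ∅ := by
  have h' := (Set.disjoint_image_iff g.symm.injective).2 h
  rwa [g.symm_image_image, ← Set.image_comp, Set.disjoint_iff_inter_eq_empty] at h'

theorem uniqueness_of_limit_hamiltonian_general
    {B : Type*} [MetricSpace B]
    (φF : Homeomorph B B)
    (Φ : ℕ → B → B)
    (ψ : B → B) (hψ : Continuous ψ)
    (hconv : TendstoUniformly Φ ψ atTop)
    (e : Set B → ℝ) (ν : ℕ → ℝ)
    (he_pos : ∀ A : Set B, (interior A).Nonempty → 0 < e A)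
    (hec : ∀ i (A : Set B), ((φF.symm ∘ Φ i) '' A) ∩ A = ∅ → e A ≤ ν i)
    (hν : Tendsto ν atTop (nhds 0)) :
    ψ = ⇑φF := by
  by_contra hne
  obtain ⟨x, hx⟩ := Function.ne_iff.1 hne
  obtain ⟨U, hU, hdisj⟩ := hconv.exists_mem_nhds_eventually_disjoint_image
    hψ.continuousAt φF.continuous.continuousAt hx
  have heU : 0 < e U := he_pos U ⟨x, mem_interior_iff_mem_nhds.2 hU⟩
  have hev : ∀ᶠ i in atTop, e U ≤ ν i :=
    hdisj.mono fun i hi => hec i U (φF.toEquiv.image_symm_comp_inter_eq_empty hi)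
  linarith [ge_of_tendsto hν hev]

/-- (Oh–Müller / Proposition 5.1, abstract form.)  Let `B` be a
compact (symplectic) manifold with a nontrivial Hofer displacement energy `e`:
`e A > 0` for every set `A` with nonempty interior.  Let `φF` be the time-`t`
map `φ^t_F` of the Hamiltonian flow of `F`, let `Φ i = φ^t_{F_i}` be the
time-`t` maps of a sequence of Hamiltonian isotopies converging uniformly to a
homeomorphism `ψ`, and let `ν i = ‖F_i # F̄‖_Hofer → 0` dominate the
displacement energy of any set displaced by `(φ^t_F)⁻¹ ∘ φ^t_{F_i}` (the
energy–capacity inequality).  Then `ψ = φ^t_F`. -/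
theorem uniqueness_of_limit_hamiltonian
    {B : Type*} [MetricSpace B] [CompactSpace B] [Nonempty B]
    (φF : Homeomorph B B)
    (Φ : ℕ → B → B) (hΦ : ∀ i, Continuous (Φ i))
    (ψ : B → B) (hψ : Continuous ψ)
    (hconv : TendstoUniformly Φ ψ atTop)
    (e : Set B → ℝ) (ν : ℕ → ℝ)
    (he_pos : ∀ A : Set B, (interior A).Nonempty → 0 < e A)
    (hec : ∀ i (A : Set B), ((φF.symm ∘ Φ i) '' A) ∩ A = ∅ → e A ≤ ν i)
    (hν : Tendsto ν atTop (nhds 0)) :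
    ψ = ⇑φF :=
  uniqueness_of_limit_hamiltonian_general φF Φ ψ hψ hconv e ν he_pos hec hν
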